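/- arXiv:2508.06298 — 2 statements merged into one kernel-verified Lean document; each statement's English description precedes it below -/
import Mathlib

section
/- Let μ_sc be the semicircular law, the probability measure on ℝ with density f(x) = (1/(2π))√(4 − x²) on [−2, 2] and zero elsewhere. For every real z > 2, the Stieltjes transform satisfies ∫ 1/(x − z) dμ_sc(x) = (−z + √(z² − 4))/2. -/
open MeasureTheory Real

/-- The semicircular law: the probability measure on `ℝ` with density
`(1/(2π))√(4 − x²)` on `[−2, 2]` and `0` elsewhere. -/
noncomputable def semicircleLaw : Measure ℝ :=
  volume.withDensity (fun x : ℝ =>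
    ENNReal.ofReal (if |x| ≤ 2 then Real.sqrt (4 - x ^ 2) / (2 * π) else 0))

/-!
Against Lebesgue measure the transform is `(2π)⁻¹ ∫_{-r}^{r} √(r² - x²) / (x - z) dx` with
`r = 2`. For `z > r` this integrand has the elementary primitive
`√(r² - x²) - z arcsin (x / r) - √(z² - r²) arcsin ((r² - z x) / (r (z - x)))`:
the Möbius map in the last term sends `[-r, r]` onto `[-1, 1]`, from `1` down to `-1`,
so the fundamental theorem of calculus gives `π (√(z² - r²) - z)`.
-/

open Set

theorem integral_semicircleLaw {E : Type*} [NormedAddCommGroup E] [NormedSpace ℝ E]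
    (f : ℝ → E) :
    ∫ x, f x ∂semicircleLaw = (2 * π)⁻¹ • ∫ x in (-2)..2, √(4 - x ^ 2) • f x := by
  have hmeas : Measurable fun x : ℝ =>
      ENNReal.ofReal (if |x| ≤ 2 then √(4 - x ^ 2) / (2 * π) else 0) :=
    (Measurable.ite (measurableSet_le (by fun_prop) measurable_const) (by fun_prop)
      measurable_const).ennreal_ofReal
  rw [semicircleLaw, integral_withDensity_eq_integral_toReal_smul hmeas
      (.of_forall fun _ => ENNReal.ofReal_lt_top),
    intervalIntegral.integral_of_le (by norm_num), ← integral_Icc_eq_integral_Ioc,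
    ← integral_smul, ← integral_indicator measurableSet_Icc]
  congr 1 with x
  by_cases hx : |x| ≤ 2
  · have hdens : 0 ≤ √(4 - x ^ 2) / (2 * π) := by positivity
    rw [indicator_of_mem (show x ∈ Icc (-2 : ℝ) 2 from abs_le.mp hx), if_pos hx,
      ENNReal.toReal_ofReal hdens, smul_smul]
    ring_nf
  · have : x ∉ Icc (-2 : ℝ) 2 := fun h => hx (abs_le.mpr h)
    simp [hx, this]

section
variable {r z x : ℝ}

theorem hasDerivAt_sqrt_sq_sub_sq (hx : x ∈ Ioo (-r) r) :
    HasDerivAt (fun y => √(r ^ 2 - y ^ 2)) (-x / √(r ^ 2 - x ^ 2)) x := by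
  have hpos : 0 < r ^ 2 - x ^ 2 := by nlinarith [hx.1, hx.2]
  convert ((hasDerivAt_pow 2 x).const_sub (r ^ 2)).sqrt hpos.ne' using 1
  field_simp
  ring

theorem hasDerivAt_arcsin_div (hx : x ∈ Ioo (-r) r) :
    HasDerivAt (fun y => arcsin (y / r)) (1 / √(r ^ 2 - x ^ 2)) x := by
  have hr : 0 < r := by linarith [hx.1, hx.2]
  have hpos : 0 < r ^ 2 - x ^ 2 := by nlinarith [hx.1, hx.2]
  have hsqrt : √(1 - (x / r) ^ 2) = √(r ^ 2 - x ^ 2) / r := by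
    rw [div_pow, one_sub_div (by positivity), sqrt_div' _ (sq_nonneg r), sqrt_sq hr.le]
  have h1 : x / r ≠ -1 := by
    rw [ne_eq, div_eq_iff hr.ne']; linarith [hx.1]
  have h2 : x / r ≠ 1 := by
    rw [ne_eq, div_eq_iff hr.ne']; linarith [hx.2]
  refine ((hasDerivAt_arcsin h1 h2).comp x ((hasDerivAt_id x).div_const r)).congr_deriv ?_
  rw [hsqrt]
  field_simp

theorem hasDerivAt_arcsin_moebius (hz : r < z) (hx : x ∈ Ioo (-r) r) :
    HasDerivAt (fun y => arcsin ((r ^ 2 - z * y) / (r * (z - y))))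
      (-√(z ^ 2 - r ^ 2) / ((z - x) * √(r ^ 2 - x ^ 2))) x := by
  have hr : 0 < r := by linarith [hx.1, hx.2]
  have hzx : 0 < z - x := by linarith [hx.2]
  have hq : 0 < r ^ 2 - x ^ 2 := by nlinarith [hx.1, hx.2]
  have hs : 0 < z ^ 2 - r ^ 2 := by nlinarith
  set u := (r ^ 2 - z * x) / (r * (z - x))
  have hu : HasDerivAt (fun y => (r ^ 2 - z * y) / (r * (z - y)))
      ((r ^ 2 - z ^ 2) / (r * (z - x) ^ 2)) x := by
    refine (((hasDerivAt_id x).const_mul z).const_sub (r ^ 2)).div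
      (((hasDerivAt_id x).const_sub z).const_mul r) (by positivity) |>.congr_deriv ?_
    simp only [id]
    field_simp
    ring
  have hsqrt : √(1 - u ^ 2) = √(z ^ 2 - r ^ 2) * √(r ^ 2 - x ^ 2) / (r * (z - x)) := by
    rw [← sqrt_mul hs.le, ← sqrt_sq (by positivity : 0 ≤ r * (z - x)),
      ← sqrt_div' _ (by positivity)]
    congr 1
    simp only [u]
    field_simp
    ring
  have hu1 : 0 < 1 - u ^ 2 := by
    rw [← sqrt_pos, hsqrt]; positivity
  have h1 : u ≠ -1 := by rintro h; simp [h] at hu1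
  have h2 : u ≠ 1 := by rintro h; simp [h] at hu1
  refine ((hasDerivAt_arcsin h1 h2).comp x hu).congr_deriv ?_
  rw [hsqrt]
  have := sq_sqrt hs.le
  field_simp
  linear_combination this

noncomputable def semicircleStieltjesPrimitive (r z x : ℝ) : ℝ :=
  √(r ^ 2 - x ^ 2) - z * arcsin (x / r)
    - √(z ^ 2 - r ^ 2) * arcsin ((r ^ 2 - z * x) / (r * (z - x)))

theorem hasDerivAt_semicircleStieltjesPrimitive (hz : r < z) (hx : x ∈ Ioo (-r) r) :
    HasDerivAt (semicircleStieltjesPrimitive r z) (√(r ^ 2 - x ^ 2) / (x - z)) x := by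
  have hq : 0 < r ^ 2 - x ^ 2 := by nlinarith [hx.1, hx.2]
  have hzx : x - z ≠ 0 := by linarith [hx.2]
  have hzx' : z - x ≠ 0 := by linarith [hx.2]
  refine (((hasDerivAt_sqrt_sq_sub_sq hx).sub ((hasDerivAt_arcsin_div hx).const_mul z)).sub
    ((hasDerivAt_arcsin_moebius hz hx).const_mul _)).congr_deriv ?_
  have hs := sq_sqrt (by nlinarith [hx.1, hx.2] : 0 ≤ z ^ 2 - r ^ 2)
  have hq' := sq_sqrt hq.le
  have : √(r ^ 2 - x ^ 2) ≠ 0 := (sqrt_pos.2 hq).ne'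
  field_simp
  rw [hs, hq']
  ring

theorem continuousOn_semicircleStieltjesPrimitive (hr : 0 < r) (hz : r < z) :
    ContinuousOn (semicircleStieltjesPrimitive r z) (Icc (-r) r) := by
  have hden : ∀ x ∈ Icc (-r) r, r * (z - x) ≠ 0 := fun x hx => by
    have : 0 < z - x := by linarith [hx.2]
    positivity
  unfold semicircleStieltjesPrimitive
  fun_prop (disch := assumption)

theorem integral_sqrt_sq_sub_sq_div_sub (hr : 0 < r) (hz : r < z) :
    ∫ x in (-r)..r, √(r ^ 2 - x ^ 2) / (x - z) = π * (-z + √(z ^ 2 - r ^ 2)) := by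
  have hint : IntervalIntegrable (fun x => √(r ^ 2 - x ^ 2) / (x - z)) volume (-r) r := by
    refine ContinuousOn.intervalIntegrable ?_
    have : ∀ x ∈ uIcc (-r) r, x - z ≠ 0 := fun x hx => by
      rw [uIcc_of_le (by linarith)] at hx
      linarith [hx.2]
    fun_prop (disch := assumption)
  rw [intervalIntegral.integral_eq_sub_of_hasDerivAt_of_le (by linarith)
    (continuousOn_semicircleStieltjesPrimitive hr hz)
    (fun x hx => hasDerivAt_semicircleStieltjesPrimitive hz hx) hint]
  have e1 : (r ^ 2 - z * r) / (r * (z - r)) = -1 := by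
    rw [div_eq_iff (by nlinarith)]; ring
  have e2 : (r ^ 2 - z * -r) / (r * (z - -r)) = 1 := by
    rw [div_eq_iff (by nlinarith)]; ring
  simp only [semicircleStieltjesPrimitive, e1, e2, sub_self, neg_sq, arcsin_one, arcsin_neg_one,
    div_self hr.ne', neg_div_self hr.ne']
  ring
end

/-- **Stieltjes transform of the semicircular law.**  For every real `z > 2`,
`∫ 1/(x − z) dμ_sc(x) = (−z + √(z² − 4))/2`. -/
theorem stieltjes_transform_semicircle (z : ℝ) (hz : 2 < z) :
    ∫ x, 1 / (x - z) ∂semicircleLaw = (-z + Real.sqrt (z ^ 2 - 4)) / 2 := by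
  have h := integral_sqrt_sq_sub_sq_div_sub two_pos hz
  norm_num at h
  rw [integral_semicircleLaw]
  simp only [smul_eq_mul, mul_one_div, h]
  field_simp
end

section
/- Let μ_sc be the semicircular law, and for each K ≥ 2 let 2 = λ̃_1^{(K)} ≥ λ̃_2^{(K)} ≥ … ≥ λ̃_K^{(K)} ≥ λ̃_{K+1}^{(K)} = −2 be points such that μ_sc([λ̃_{j+1}^{(K)}, λ̃_j^{(K)}]) = 1/K for each j = 1, …, K. Fix β > 1 and set z_K = 2 + 1/((β − 1)K). Then (1/K) Σ_{i=2}^{K} 1/(z_K − λ̃_i^{(K)}) → 1 as K → ∞; consequently, since (1/K)·1/(z_K − λ̃_1^{(K)}) = β − 1, one has (1/K) Σ_{i=1}^{K} 1/(z_K − λ̃_i^{(K)}) → β as K → ∞. -/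
open MeasureTheory Filter Real

/-!
Index the quantiles as `2 = λ₀ ≥ λ₁ ≥ ⋯ ≥ λ_K = -2`. Since `x ↦ 1 / (z - x)` is increasing
and the slabs `[λ_{j+1}, λ_j]` have semicircle mass `1 / K`, each term `(1 / K) / (z - λᵢ)` lies
between the integrals of `ρ(x) / (z - x)` over the slabs just below and just above `λᵢ`.
Summing over `1 ≤ i < K`, the Riemann sum is squeezed between `∫_{-2}^{λ₁}` and `∫_{λ_{K-1}}^{2}`
of `ρ(x) / (z - x)`. Now `(2 arcsin (x / 2) - √(4 - x²)) / (2π)` is a primitive of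
`ρ(x) / (2 - x)` with total increase `1`: this bounds the sum by `1`, and bounds the missing
tail `∫_{λ₁}^{2}` by an increment of the primitive that vanishes because `λ₁ → 2`. Dominated
convergence gives `∫ ρ(x) / (z - x) → 1` as `z ↓ 2`. Finally the term `i = 0` equals `β - 1`
by the choice of `z_K`.
-/

open Set Topology intervalIntegral

section RiemannSums

variable {f φ : ℝ → ℝ}

lemma mul_le_integral_mul_le_mul_of_monotoneOn {a b : ℝ} (hab : a ≤ b)
    (hf : ContinuousOn f (Icc a b)) (hφ : ContinuousOn φ (Icc a b))
    (hφm : MonotoneOn φ (Icc a b)) (hf0 : ∀ x ∈ Icc a b, 0 ≤ f x) :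
    (∫ x in a..b, f x) * φ a ≤ ∫ x in a..b, f x * φ x ∧
      ∫ x in a..b, f x * φ x ≤ (∫ x in a..b, f x) * φ b := by
  have hfi (c : ℝ) : IntervalIntegrable (fun x => f x * c) volume a b :=
    (hf.mul continuousOn_const).intervalIntegrable_of_Icc hab
  have hfφ : IntervalIntegrable (fun x => f x * φ x) volume a b :=
    (hf.mul hφ).intervalIntegrable_of_Icc hab
  rw [← intervalIntegral.integral_mul_const, ← intervalIntegral.integral_mul_const]
  exact ⟨integral_mono_on hab (hfi _) hfφ fun x hx =>
      mul_le_mul_of_nonneg_left (hφm ⟨le_rfl, hab⟩ hx hx.1) (hf0 x hx),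
    integral_mono_on hab hfφ (hfi _) fun x hx =>
      mul_le_mul_of_nonneg_left (hφm hx ⟨hab, le_rfl⟩ hx.2) (hf0 x hx)⟩

lemma sum_integral_adjacent_intervals_Ico_rev {u : ℕ → ℝ} {m n : ℕ} (hmn : m ≤ n)
    (hint : ∀ k ∈ Ico m n, IntervalIntegrable f volume (u (k + 1)) (u k)) :
    ∑ k ∈ Finset.Ico m n, ∫ x in u (k + 1)..u k, f x = ∫ x in u n..u m, f x := by
  rw [integral_symm, ← sum_integral_adjacent_intervals_Ico hmn fun k hk => (hint k hk).symm,
    ← Finset.sum_neg_distrib]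
  exact Finset.sum_congr rfl fun k _ => integral_symm _ _

variable {u : ℕ → ℝ} {n : ℕ} {m : ℝ}

lemma integral_mul_le_sum_of_antitone (hn : 1 ≤ n) (hu : Antitone u)
    (hf : ContinuousOn f (Icc (u n) (u 0))) (hφ : ContinuousOn φ (Icc (u n) (u 0)))
    (hφm : MonotoneOn φ (Icc (u n) (u 0))) (hf0 : ∀ x ∈ Icc (u n) (u 0), 0 ≤ f x)
    (hmass : ∀ j < n, ∫ x in u (j + 1)..u j, f x = m) :
    ∫ x in u n..u 1, f x * φ x ≤ ∑ i ∈ Finset.Ico 1 n, m * φ (u i) := by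
  have hsub {j : ℕ} (hj : j < n) : Icc (u (j + 1)) (u j) ⊆ Icc (u n) (u 0) :=
    Icc_subset_Icc (hu hj) (hu j.zero_le)
  rw [← sum_integral_adjacent_intervals_Ico_rev (f := fun x => f x * φ x) hn fun k hk =>
    ((hf.mono (hsub hk.2)).mul (hφ.mono (hsub hk.2))).intervalIntegrable_of_Icc (hu k.le_succ)]
  refine Finset.sum_le_sum fun k hk => ?_
  have hk : k < n := (Finset.mem_Ico.1 hk).2
  rw [← hmass k hk]
  exact (mul_le_integral_mul_le_mul_of_monotoneOn (hu k.le_succ) (hf.mono (hsub hk))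
    (hφ.mono (hsub hk)) (hφm.mono (hsub hk)) fun x hx => hf0 x (hsub hk hx)).2

lemma sum_le_integral_mul_of_antitone (hn : 1 ≤ n) (hu : Antitone u)
    (hf : ContinuousOn f (Icc (u n) (u 0))) (hφ : ContinuousOn φ (Icc (u n) (u 0)))
    (hφm : MonotoneOn φ (Icc (u n) (u 0))) (hf0 : ∀ x ∈ Icc (u n) (u 0), 0 ≤ f x)
    (hmass : ∀ j < n, ∫ x in u (j + 1)..u j, f x = m) :
    ∑ i ∈ Finset.Ico 1 n, m * φ (u i) ≤ ∫ x in u (n - 1)..u 0, f x * φ x := by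
  have hsub {j : ℕ} (hj : j < n) : Icc (u (j + 1)) (u j) ⊆ Icc (u n) (u 0) :=
    Icc_subset_Icc (hu hj) (hu j.zero_le)
  rw [← sum_integral_adjacent_intervals_Ico_rev (f := fun x => f x * φ x) (n - 1).zero_le
      fun k hk =>
      have hk : k < n := by have := hk.2; omega
      ((hf.mono (hsub hk)).mul (hφ.mono (hsub hk))).intervalIntegrable_of_Icc (hu k.le_succ),
    ← Nat.sub_add_cancel hn, ← zero_add 1, ← Finset.sum_Ico_add', Nat.sub_add_cancel hn]
  refine Finset.sum_le_sum fun k hk => ?_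
  have hk : k < n := by have := (Finset.mem_Ico.1 hk).2; omega
  rw [← hmass k hk]
  exact (mul_le_integral_mul_le_mul_of_monotoneOn (hu k.le_succ) (hf.mono (hsub hk))
    (hφ.mono (hsub hk)) (hφm.mono (hsub hk)) fun x hx => hf0 x (hsub hk hx)).1

end RiemannSums

lemma tendsto_of_tendsto_integral_zero {ι : Type*} {l : Filter ι} {f : ℝ → ℝ} {u : ι → ℝ}
    {b c : ℝ} (hf : Continuous f) (hf0 : 0 ≤ f) (hcb : c < b) (hpos : ∀ x ∈ Ioo c b, 0 < f x)
    (hub : ∀ᶠ i in l, u i ≤ b) (hint : Tendsto (fun i => ∫ x in u i..b, f x) l (𝓝 0)) :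
    Tendsto u l (𝓝 b) := by
  refine tendsto_order.2 ⟨fun a ha => ?_, fun a ha => hub.mono fun i hi => hi.trans_lt ha⟩
  have he : max a c < b := max_lt ha hcb
  have hmass : 0 < ∫ x in max a c..b, f x := intervalIntegral_pos_of_pos_on
    (hf.intervalIntegrable _ _) (fun x hx => hpos x ⟨(le_max_right a c).trans_lt hx.1, hx.2⟩) he
  filter_upwards [hint.eventually_lt_const hmass] with i hi
  by_contra! hia
  have := integral_mono_interval (hia.trans (le_max_left a c)) he.le le_rfl
    (ae_of_all _ hf0) (hf.intervalIntegrable (μ := volume) (u i) b)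
  linarith

noncomputable def scDensity (x : ℝ) : ℝ := √(4 - x ^ 2) / (2 * π)

lemma continuous_scDensity : Continuous scDensity := by
  unfold scDensity; fun_prop

lemma scDensity_nonneg (x : ℝ) : 0 ≤ scDensity x := by
  unfold scDensity; positivity

lemma scDensity_pos {x : ℝ} (hx : x ∈ Ioo (-2) 2) : 0 < scDensity x := by
  have : 0 < 4 - x ^ 2 := by nlinarith [hx.1, hx.2]
  unfold scDensity; positivity

-- `Real.sqrt` vanishes on `(-∞, 0]`, so the indicator of `[-2, 2]` in the definition is redundant.
lemma semicircleLaw_eq_withDensity :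
    semicircleLaw = volume.withDensity fun x => ENNReal.ofReal (scDensity x) := by
  refine congrArg _ (funext fun x => ?_)
  split_ifs with hx
  · rfl
  · have : 4 - x ^ 2 ≤ 0 := by nlinarith [not_le.1 hx, sq_abs x]
    simp [scDensity, Real.sqrt_eq_zero'.2 this]

lemma semicircleLaw_Icc {a b : ℝ} (hab : a ≤ b) :
    semicircleLaw (Icc a b) = ENNReal.ofReal (∫ x in a..b, scDensity x) := by
  rw [semicircleLaw_eq_withDensity, withDensity_apply _ measurableSet_Icc,
    ← ofReal_integral_eq_lintegral_ofReal continuous_scDensity.integrableOn_Icc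
      (ae_of_all _ scDensity_nonneg), integral_of_le hab, integral_Icc_eq_integral_Ioc]

noncomputable def scPrimitive (x : ℝ) : ℝ := (2 * arcsin (x / 2) - √(4 - x ^ 2)) / (2 * π)

lemma continuous_scPrimitive : Continuous scPrimitive := by
  unfold scPrimitive; fun_prop

lemma scPrimitive_two_sub_scPrimitive_neg_two : scPrimitive 2 - scPrimitive (-2) = 1 := by
  norm_num [scPrimitive]
  field_simp
  ring

lemma hasDerivAt_scPrimitive {x : ℝ} (hx : x ∈ Ioo (-2) 2) :
    HasDerivAt scPrimitive (scDensity x / (2 - x)) x := by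
  obtain ⟨hx₁, hx₂⟩ := hx
  have hs : 0 < 4 - x ^ 2 := by nlinarith
  have hsqrt : √(4 - x ^ 2) ^ 2 = 4 - x ^ 2 := sq_sqrt hs.le
  have hhalf : √(1 - (x / 2) ^ 2) = √(4 - x ^ 2) / 2 := by
    rw [show 1 - (x / 2) ^ 2 = (4 - x ^ 2) / 2 ^ 2 by ring, sqrt_div' _ (by norm_num),
      sqrt_sq (by norm_num)]
  have harcsin := (hasDerivAt_arcsin (x := x / 2) (by linarith) (by linarith)).comp x
    ((hasDerivAt_id x).div_const 2)
  have hroot := (hasDerivAt_sqrt hs.ne').comp x ((hasDerivAt_pow 2 x).const_sub 4)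
  refine (((harcsin.const_mul 2).sub hroot).div_const (2 * π)).congr_deriv ?_
  rw [hhalf, scDensity]
  have : 2 - x ≠ 0 := by linarith
  field_simp
  linear_combination -2 * hsqrt

lemma monotoneOn_scPrimitive : MonotoneOn scPrimitive (Icc (-2) 2) := by
  refine monotoneOn_of_deriv_nonneg (convex_Icc _ _) continuous_scPrimitive.continuousOn
    (fun x hx => ?_) fun x hx => ?_ <;> rw [interior_Icc] at hx
  · exact (hasDerivAt_scPrimitive hx).differentiableAt.differentiableWithinAt
  · rw [(hasDerivAt_scPrimitive hx).deriv]
    exact div_nonneg (scDensity_nonneg x) (by linarith [hx.2])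

lemma continuousOn_scDensity_div_sub {z : ℝ} (hz : 2 < z) :
    ContinuousOn (fun x => scDensity x / (z - x)) (Iic 2) :=
  continuous_scDensity.continuousOn.div (by fun_prop) fun x hx => by
    linarith [show x ≤ 2 from hx]

lemma integral_scDensity_div_sub_le {z c : ℝ} (hz : 2 < z) (hc : c ∈ Icc (-2) 2) :
    ∫ x in c..2, scDensity x / (z - x) ≤ scPrimitive 2 - scPrimitive c := by
  refine integral_le_sub_of_hasDeriv_right_of_le hc.2 continuous_scPrimitive.continuousOn
    (fun x hx => (hasDerivAt_scPrimitive ⟨by linarith [hc.1, hx.1], hx.2⟩).hasDerivWithinAt)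
    ((continuousOn_scDensity_div_sub hz).mono fun x hx => hx.2).integrableOn_Icc
    fun x hx => ?_
  gcongr
  · exact scDensity_nonneg x
  · linarith [hx.2]

lemma intervalIntegrable_scDensity_div_two_sub :
    IntervalIntegrable (fun x => scDensity x / (2 - x)) volume (-2) 2 :=
  intervalIntegrable_deriv_of_nonneg continuous_scPrimitive.continuousOn
    (fun x hx => hasDerivAt_scPrimitive (by simpa using hx))
    fun x hx => div_nonneg (scDensity_nonneg x) (by simp at hx; linarith [hx.2])

lemma integral_scDensity_div_two_sub : ∫ x in (-2)..2, scDensity x / (2 - x) = 1 := by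
  rw [integral_eq_sub_of_hasDerivAt_of_le (by norm_num) continuous_scPrimitive.continuousOn
    (fun x hx => hasDerivAt_scPrimitive hx) intervalIntegrable_scDensity_div_two_sub,
    scPrimitive_two_sub_scPrimitive_neg_two]

lemma tendsto_integral_scDensity_div_sub :
    Tendsto (fun z => ∫ x in (-2)..2, scDensity x / (z - x)) (𝓝[>] 2) (𝓝 1) := by
  rw [← integral_scDensity_div_two_sub]
  refine tendsto_integral_filter_of_dominated_convergence _
    (Eventually.of_forall fun z => (continuous_scDensity.measurable.div
      (measurable_const.sub measurable_id)).aestronglyMeasurable) ?_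
    intervalIntegrable_scDensity_div_two_sub ((Measure.ae_ne volume 2).mono fun x hx2 _ => ?_)
  · filter_upwards [eventually_mem_nhdsWithin] with z (hz : 2 < z)
    refine (Measure.ae_ne volume 2).mono fun x hx2 hx => ?_
    have hx : x < 2 := lt_of_le_of_ne (by simpa using hx.2) hx2
    rw [Real.norm_of_nonneg (div_nonneg (scDensity_nonneg x) (by linarith))]
    gcongr
    exact scDensity_nonneg x
  · have hx : 2 - x ≠ 0 := sub_ne_zero.2 hx2.symm
    exact tendsto_const_nhds.div
      ((tendsto_id.sub_const x).mono_left nhdsWithin_le_nhds) hx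

lemma monotoneOn_one_div_sub {z : ℝ} : MonotoneOn (fun x : ℝ => 1 / (z - x)) (Iio z) :=
  fun x hx y hy hxy => one_div_le_one_div_of_le (sub_pos.2 hy) (by linarith)

structure IsSemicircleQuantiles (u : ℕ → ℝ) (K : ℕ) : Prop where
  antitone : Antitone u
  zero : u 0 = 2
  last : u K = -2
  integral_slab : ∀ j < K, ∫ x in u (j + 1)..u j, scDensity x = 1 / K

namespace IsSemicircleQuantiles

variable {u : ℕ → ℝ} {K : ℕ} {z : ℝ}

lemma mem_Icc (hu : IsSemicircleQuantiles u K) {j : ℕ} (hj : j ≤ K) : u j ∈ Icc (-2) 2 :=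
  ⟨hu.last ▸ hu.antitone hj, hu.zero ▸ hu.antitone j.zero_le⟩

lemma integral_le_mul_sum_le_integral (hu : IsSemicircleQuantiles u K) (hK : 1 ≤ K)
    (hz : 2 < z) :
    ∫ x in (-2)..u 1, scDensity x / (z - x) ≤ 1 / K * ∑ i ∈ Finset.Ico 1 K, 1 / (z - u i) ∧
      1 / K * ∑ i ∈ Finset.Ico 1 K, 1 / (z - u i) ≤ ∫ x in u (K - 1)..2, scDensity x / (z - x) := by
  have hIcc : Icc (u K) (u 0) = Icc (-2) 2 := by rw [hu.zero, hu.last]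
  have hsub : Icc (u K) (u 0) ⊆ Iio z := hIcc ▸ fun x hx => hx.2.trans_lt hz
  have hφ : ContinuousOn (fun x => 1 / (z - x)) (Icc (u K) (u 0)) :=
    continuousOn_const.div (by fun_prop) fun x hx => (sub_pos.2 (hsub hx)).ne'
  have hf0 : ∀ x ∈ Icc (u K) (u 0), 0 ≤ scDensity x := fun x _ => scDensity_nonneg x
  have lower := integral_mul_le_sum_of_antitone hK hu.antitone continuous_scDensity.continuousOn
    hφ (monotoneOn_one_div_sub.mono hsub) hf0 hu.integral_slab
  have upper := sum_le_integral_mul_of_antitone hK hu.antitone continuous_scDensity.continuousOn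
    hφ (monotoneOn_one_div_sub.mono hsub) hf0 hu.integral_slab
  simp only [mul_one_div, hu.zero, hu.last] at lower upper
  simp only [Finset.mul_sum, mul_one_div]
  exact ⟨lower, upper⟩

lemma integral_sub_le_mul_sum (hu : IsSemicircleQuantiles u K) (hK : 1 ≤ K) (hz : 2 < z) :
    (∫ x in (-2)..2, scDensity x / (z - x)) - (scPrimitive 2 - scPrimitive (u 1)) ≤
      1 / K * ∑ i ∈ Finset.Ico 1 K, 1 / (z - u i) := by
  have hu1 := hu.mem_Icc hK
  have hint (a b : ℝ) (ha : a ≤ 2) (hb : b ≤ 2) :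
      IntervalIntegrable (fun x => scDensity x / (z - x)) volume a b :=
    ((continuousOn_scDensity_div_sub hz).mono fun x hx =>
      hx.2.trans (max_le ha hb)).intervalIntegrable
  rw [← integral_add_adjacent_intervals (hint _ _ (by norm_num) hu1.2) (hint _ _ hu1.2 le_rfl)]
  linarith [(hu.integral_le_mul_sum_le_integral hK hz).1, integral_scDensity_div_sub_le hz hu1]

lemma mul_sum_le_one (hu : IsSemicircleQuantiles u K) (hK : 1 ≤ K) (hz : 2 < z) :
    1 / K * ∑ i ∈ Finset.Ico 1 K, 1 / (z - u i) ≤ 1 := by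
  have hlast := hu.mem_Icc (K.sub_le 1)
  calc 1 / K * ∑ i ∈ Finset.Ico 1 K, 1 / (z - u i)
      ≤ ∫ x in u (K - 1)..2, scDensity x / (z - x) := (hu.integral_le_mul_sum_le_integral hK hz).2
    _ ≤ scPrimitive 2 - scPrimitive (u (K - 1)) := integral_scDensity_div_sub_le hz hlast
    _ ≤ scPrimitive 2 - scPrimitive (-2) := by
      gcongr; exact monotoneOn_scPrimitive ⟨le_rfl, by norm_num⟩ hlast hlast.1
    _ = 1 := scPrimitive_two_sub_scPrimitive_neg_two

end IsSemicircleQuantiles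

theorem tendsto_mul_sum_one_div_sub_quantiles {u : ℕ → ℕ → ℝ} {z : ℕ → ℝ}
    (hu : ∀ᶠ K in atTop, IsSemicircleQuantiles (u K) K) (hz : Tendsto z atTop (𝓝[>] 2)) :
    Tendsto (fun K : ℕ => 1 / (K : ℝ) * ∑ i ∈ Finset.Ico 1 K, 1 / (z K - u K i)) atTop (𝓝 1) := by
  have hK : ∀ᶠ K in atTop, IsSemicircleQuantiles (u K) K ∧ 1 ≤ K ∧ 2 < z K :=
    hu.and ((eventually_ge_atTop 1).and (hz.eventually eventually_mem_nhdsWithin))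
  -- The first slab has mass `1/K → 0`, which forces `u K 1 → 2`.
  have hu₁ : Tendsto (fun K => u K 1) atTop (𝓝 2) :=
    tendsto_of_tendsto_integral_zero continuous_scDensity scDensity_nonneg
      (by norm_num : (-2 : ℝ) < 2) (fun x hx => scDensity_pos hx)
      (hK.mono fun K h => (h.1.mem_Icc h.2.1).2)
      (tendsto_one_div_atTop_nhds_zero_nat.congr' <| hK.mono fun K h => by
        rw [← h.1.zero]; exact (h.1.integral_slab 0 h.2.1).symm)
  have hlower : Tendsto (fun K => (∫ x in (-2)..2, scDensity x / (z K - x)) -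
      (scPrimitive 2 - scPrimitive (u K 1))) atTop (𝓝 (1 - (scPrimitive 2 - scPrimitive 2))) :=
    (tendsto_integral_scDensity_div_sub.comp hz).sub
      (tendsto_const_nhds.sub ((continuous_scPrimitive.tendsto 2).comp hu₁))
  rw [sub_self, sub_zero] at hlower
  exact tendsto_of_tendsto_of_tendsto_of_le_of_le' hlower tendsto_const_nhds
    (hK.mono fun K h => h.1.integral_sub_le_mul_sum h.2.1 h.2.2)
    (hK.mono fun K h => h.1.mul_sum_le_one h.2.1 h.2.2)

lemma Fin.clamp_eq_mk {j K : ℕ} (hj : j ≤ K) : Fin.clamp j K = ⟨j, Nat.lt_succ_of_le hj⟩ :=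
  Fin.ext (by simp [Fin.coe_clamp, hj])

lemma isSemicircleQuantiles_comp_clamp {K : ℕ} {lam : Fin (K + 1) → ℝ} (h0 : lam 0 = 2)
    (hK : lam (Fin.last K) = -2) (hmono : Antitone lam)
    (hquant : ∀ j : Fin K, semicircleLaw (Icc (lam j.succ) (lam j.castSucc)) = (K : ENNReal)⁻¹) :
    IsSemicircleQuantiles (fun j => lam (Fin.clamp j K)) K where
  antitone := hmono.comp_monotone fun i j hij => Fin.le_def.2 (by simp [Fin.coe_clamp]; omega)
  zero := by rwa [Fin.clamp_eq_mk K.zero_le]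
  last := by rwa [Fin.clamp_eq_mk le_rfl]
  integral_slab j hj := by
    have h := congrArg ENNReal.toReal (hquant ⟨j, hj⟩)
    rw [semicircleLaw_Icc (hmono (Fin.castSucc_le_succ _)), ENNReal.toReal_ofReal,
      ENNReal.toReal_inv, ENNReal.toReal_natCast, ← one_div] at h
    · rw [Fin.clamp_eq_mk hj, Fin.clamp_eq_mk hj.le]
      exact h
    · exact integral_nonneg (hmono (Fin.castSucc_le_succ _)) fun x _ => scDensity_nonneg x

lemma sum_filter_fin_pos_eq_sum_Ico {M : Type*} [AddCommMonoid M] (K : ℕ) (g : ℕ → M) :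
    ∑ i ∈ Finset.univ.filter (fun i : Fin K => 0 < (i : ℕ)), g i = ∑ i ∈ Finset.Ico 1 K, g i := by
  rw [Finset.sum_filter, Fin.sum_univ_eq_sum_range (fun i => if 0 < i then g i else 0),
    ← Finset.sum_filter]
  congr 1
  ext i
  simp [Nat.one_le_iff_ne_zero, Nat.pos_iff_ne_zero, and_comm]

lemma tendsto_two_add_one_div_mul_nhdsGT {β : ℝ} (hβ : 1 < β) :
    Tendsto (fun K : ℕ => 2 + 1 / ((β - 1) * K)) atTop (𝓝[>] 2) := by
  have hβ' : 0 < β - 1 := sub_pos.2 hβ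
  refine tendsto_nhdsWithin_of_tendsto_nhds_of_eventually_within _ ?_ ?_
  · simpa using (tendsto_const_nhds (x := (2 : ℝ))).add
      ((tendsto_const_nhds (x := (1 : ℝ))).div_atTop
        (tendsto_natCast_atTop_atTop.const_mul_atTop hβ'))
  · filter_upwards [eventually_ge_atTop 1] with K hK
    have : (0 : ℝ) < K := by exact_mod_cast hK
    simp only [mem_Ioi, lt_add_iff_pos_right]
    positivity

/-- **Low-temperature solution of the Lagrange-multiplier equation.**
For each `K ≥ 2` let `2 = λ̃ K 0 ≥ λ̃ K 1 ≥ … ≥ λ̃ K (K-1) ≥ λ̃ K K = −2` be points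
splitting the mass of the semicircular law into `K` equal parts.  Fix `β > 1` and put
`z_K = 2 + 1/((β−1)K)`.  Then `(1/K) ∑_{1 ≤ i < K} 1/(z_K − λ̃ K i) → 1` as `K → ∞`;
consequently (since `(1/K) · 1/(z_K − λ̃ K 0) = β − 1`) the full sum
`(1/K) ∑_{i<K} 1/(z_K − λ̃ K i) → β`. -/
theorem quantile_sum_low_temperature
    (lam : (K : ℕ) → Fin (K + 1) → ℝ)
    (hfirst : ∀ K, 2 ≤ K → lam K 0 = 2)
    (hlast : ∀ K, 2 ≤ K → lam K (Fin.last K) = -2)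
    (hmono : ∀ K, 2 ≤ K → Antitone (lam K))
    (hquant : ∀ K, 2 ≤ K → ∀ j : Fin K,
      semicircleLaw (Set.Icc (lam K j.succ) (lam K j.castSucc)) = (K : ENNReal)⁻¹)
    (β : ℝ) (hβ : 1 < β) :
    Tendsto
      (fun K : ℕ => (1 / (K : ℝ)) * ∑ i ∈ Finset.univ.filter (fun i : Fin K => 0 < (i : ℕ)),
        1 / ((2 + 1 / ((β - 1) * K)) - lam K i.castSucc))
      atTop (nhds 1)
    ∧ Tendsto
      (fun K : ℕ => (1 / (K : ℝ)) * ∑ i : Fin K,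
        1 / ((2 + 1 / ((β - 1) * K)) - lam K i.castSucc))
      atTop (nhds β) := by
  set u : ℕ → ℕ → ℝ := fun K j => lam K (Fin.clamp j K)
  have hu : ∀ᶠ K in atTop, IsSemicircleQuantiles (u K) K := eventually_atTop.2
    ⟨2, fun K hK => isSemicircleQuantiles_comp_clamp (hfirst K hK) (hlast K hK) (hmono K hK)
      (hquant K hK)⟩
  have hpos := tendsto_mul_sum_one_div_sub_quantiles hu (tendsto_two_add_one_div_mul_nhdsGT hβ)
  have hfull : ∀ᶠ K : ℕ in atTop,
      (β - 1) + 1 / (K : ℝ) * ∑ i ∈ Finset.Ico 1 K, 1 / ((2 + 1 / ((β - 1) * K)) - u K i) =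
        1 / (K : ℝ) * ∑ i ∈ Finset.range K, 1 / ((2 + 1 / ((β - 1) * K)) - u K i) := by
    filter_upwards [hu, eventually_ge_atTop 1] with K hK hK1
    rw [Finset.range_eq_Ico, Finset.sum_eq_sum_Ico_succ_bot hK1, hK.zero, mul_add]
    have : (K : ℝ) ≠ 0 := by positivity
    have : β - 1 ≠ 0 := by linarith
    field_simp
    ring
  have hlam (K : ℕ) (i : Fin K) : lam K i.castSucc = u K i :=
    congrArg (lam K) (Fin.clamp_eq_mk i.isLt.le).symm
  simp only [← sum_filter_fin_pos_eq_sum_Ico, ← Fin.sum_univ_eq_sum_range, ← hlam]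
    at hpos hfull
  exact ⟨hpos, by simpa using (hpos.const_add (β - 1)).congr' hfull⟩
end
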